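/- For the modified Bessel operators acting on ℂ[z_0,…,z_{m−1}] one has: B̃(z_0) e^{−z_0} = (2 − m + z_0) e^{−z_0}, and B̃(z_k) e^{−z_0} = z_k e^{−z_0} for k ∈ {1,…,m−1}, where the identities hold as formal power series (equivalently, as identities of real-analytic functions). -/

import Mathlib

/-!
The function `e^{−z_0}` depends on `z_0` alone and is fixed by the lowered derivative
`∂_0 = −∂^0`, while `∂_k` kills it for `k ≥ 1`. Hence `E e^{−z_0} = −z_0 e^{−z_0}` and
`Δ e^{−z_0} = −e^{−z_0}`, and both identities follow by substituting into `B̃`.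
-/

noncomputable section

/-- The diagonal entries of the bilinear form `β`: `β_{00} = −1`, `β_{kk} = 1` for `k ≥ 1`. -/
def sgnC (m : ℕ) (i : Fin m) : ℂ := if (i : ℕ) = 0 then -1 else 1

/-- The plain partial derivative `∂^i` of a function of `m` complex variables. -/
def Dc (m : ℕ) (i : Fin m) (f : (Fin m → ℂ) → ℂ) : (Fin m → ℂ) → ℂ :=
  fun z => fderiv ℂ f z (Pi.single i 1)

/-- The lowered partial derivative `∂_i = ∑_k β_{ik} ∂^k`. -/
def dlowF (m : ℕ) (i : Fin m) (f : (Fin m → ℂ) → ℂ) : (Fin m → ℂ) → ℂ :=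
  fun z => sgnC m i * Dc m i f z

/-- The Euler operator `E = ∑_{i,j} β^{ij} z_i ∂_j`. -/
def EF (m : ℕ) (f : (Fin m → ℂ) → ℂ) : (Fin m → ℂ) → ℂ :=
  fun z => ∑ i, sgnC m i * (z i * dlowF m i f z)

/-- The Laplacian `Δ = ∑_{i,j} β^{ij} ∂_i ∂_j`. -/
def LapF (m : ℕ) (f : (Fin m → ℂ) → ℂ) : (Fin m → ℂ) → ℂ :=
  fun z => ∑ i, sgnC m i * dlowF m i (dlowF m i f) z

/-- The Bessel operator `B(z_i) = (m − 2 + 2E)∂_i − z_i Δ` on functions. -/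
def BFn (m : ℕ) (i : Fin m) (f : (Fin m → ℂ) → ℂ) : (Fin m → ℂ) → ℂ :=
  fun z => ((m : ℂ) - 2) * dlowF m i f z + 2 * EF m (dlowF m i f) z - z i * LapF m f z

/-- The modified Bessel operator: `B̃(z_0) = −B(z_0)`, `B̃(z_k) = B(z_k)` for `k ≥ 1`. -/
def BtFn (m : ℕ) (i : Fin m) (f : (Fin m → ℂ) → ℂ) : (Fin m → ℂ) → ℂ :=
  fun z => sgnC m i * BFn m i f z

section

variable {m : ℕ}

lemma sgnC_zero [NeZero m] : sgnC m 0 = -1 := by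
  simp [sgnC]

lemma sgnC_of_ne_zero [NeZero m] {k : Fin m} (hk : k ≠ 0) : sgnC m k = 1 := by
  simp [sgnC, Fin.val_ne_zero_iff.mpr hk]

lemma Dc_comp_apply (i j : Fin m) {g : ℂ → ℂ} {z : Fin m → ℂ}
    (hg : DifferentiableAt ℂ g (z j)) :
    Dc m i (fun w => g (w j)) z = if i = j then deriv g (z j) else 0 := by
  have hcomp : HasFDerivAt (fun w : Fin m → ℂ => g (w j)) _ z :=
    hg.hasDerivAt.comp_hasFDerivAt z (hasFDerivAt_apply (𝕜 := ℂ) j z)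
  simp [Dc, hcomp.fderiv, Pi.single_apply, eq_comm]

lemma dlowF_const (i : Fin m) (c : ℂ) : dlowF m i (fun _ => c) = fun _ => 0 := by
  funext z
  simp [dlowF, Dc]

lemma EF_const (c : ℂ) (z : Fin m → ℂ) : EF m (fun _ => c) z = 0 := by
  simp [EF, dlowF_const]

lemma Dc_exp_neg [NeZero m] (i : Fin m) (z : Fin m → ℂ) :
    Dc m i (fun w => Complex.exp (-(w 0))) z = if i = 0 then -Complex.exp (-(z 0)) else 0 := by
  have hderiv : HasDerivAt (fun x => Complex.exp (-x)) (-Complex.exp (-(z 0))) (z 0) := by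
    simpa using (hasDerivAt_neg' (z 0)).cexp
  rw [Dc_comp_apply i 0 hderiv.differentiableAt, hderiv.deriv]

lemma dlowF_zero_exp_neg [NeZero m] :
    dlowF m 0 (fun w => Complex.exp (-(w 0))) = fun w => Complex.exp (-(w 0)) := by
  funext z
  simp [dlowF, Dc_exp_neg, sgnC_zero]

lemma dlowF_exp_neg_of_ne_zero [NeZero m] {k : Fin m} (hk : k ≠ 0) :
    dlowF m k (fun w => Complex.exp (-(w 0))) = fun _ => 0 := by
  funext z
  simp [dlowF, Dc_exp_neg, hk]

lemma EF_exp_neg [NeZero m] (z : Fin m → ℂ) :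
    EF m (fun w => Complex.exp (-(w 0))) z = -(z 0) * Complex.exp (-(z 0)) := by
  rw [EF, Fintype.sum_eq_single 0 fun k hk => by simp [dlowF_exp_neg_of_ne_zero hk],
    dlowF_zero_exp_neg, sgnC_zero]
  ring

lemma LapF_exp_neg [NeZero m] (z : Fin m → ℂ) :
    LapF m (fun w => Complex.exp (-(w 0))) z = -Complex.exp (-(z 0)) := by
  rw [LapF, Fintype.sum_eq_single 0 fun k hk => by
      simp [dlowF_exp_neg_of_ne_zero hk, dlowF_const],
    dlowF_zero_exp_neg, dlowF_zero_exp_neg, sgnC_zero]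
  ring

end

/-- `B̃(z_0) e^{−z_0} = (2 − m + z_0) e^{−z_0}` and `B̃(z_k) e^{−z_0} = z_k e^{−z_0}`
for `k ∈ {1,…,m−1}`, as identities of (real-)analytic functions. -/
theorem stmt18 (m : ℕ) [NeZero m] :
    (∀ z : Fin m → ℂ,
      BtFn m 0 (fun w => Complex.exp (-(w 0))) z =
        (2 - (m : ℂ) + z 0) * Complex.exp (-(z 0))) ∧
    (∀ k : Fin m, (k : ℕ) ≠ 0 → ∀ z : Fin m → ℂ,
      BtFn m k (fun w => Complex.exp (-(w 0))) z = z k * Complex.exp (-(z 0))) := by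
  refine ⟨fun z => ?_, fun k hk z => ?_⟩
  · rw [BtFn, BFn, sgnC_zero, dlowF_zero_exp_neg, EF_exp_neg, LapF_exp_neg]
    ring
  · have hk : k ≠ 0 := Fin.val_ne_zero_iff.mp hk
    rw [BtFn, BFn, sgnC_of_ne_zero hk, dlowF_exp_neg_of_ne_zero hk, EF_const, LapF_exp_neg]
    ring
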